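/- arXiv:1011.0319 — 2 statements merged into one kernel-verified Lean document; each statement's English description precedes it below -/
import Mathlib

section
/- Let q ≥ 3 and z ∈ (0,(q−2)/q). Set β_z = (2(q−1)/(zq)) log((1+z)/(1−z)) and h_z = log(q−1) − β_z (q−2)/(2(q−1)); then (β_z,h_z) lies on the critical line h_T, and the set of global minimum points of f_{β_z,h_z} on ℋ is exactly {x_z, x_{−z}}. -/
/-!
For `β, h > 0`, a global minimiser `x` of `f_{β,h}` on the simplex has all coordinates but the
first equal. Swapping coordinates shows that `x₁` is the largest one. The single-site potential
`ψ(t) = t log t - β t² / 2` is strictly concave on `[1/β, ∞)`, so moving mass from `x_i > 1/β` to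
`x₁` would lower `f`; and it is strictly convex on `[0, 1/β]`, so averaging two unequal `x_i`
would lower `f` as well. Hence minimisers are points `x_t`, and everything reduces to
`φ(t) = f(x_t)` on `[-1, 1]`.

On the critical line `φ` is even, and for `(β_z, h_z)` its derivative is
`(t / 2) (L(t)/t - L(z)/z)` with `L(t) = log ((1+t)/(1-t))`. The power series
`L(t)/t = ∑ 2 t^(2k) / (2k+1)` is strictly increasing on `(0, 1)`, so `φ` decreases on `[0, z]` and
increases on `[z, 1]`. The same series, with `L(t)/t > 2` and `L((q-2)/q) = log (q-1)`, puts
`(β_z, h_z)` strictly between `h = 0` and `h = h₀` on the critical line.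
-/

open Finset

noncomputable section

namespace CWP

/-- The probability simplex ℋ in ℝ^q. -/
def simplexH (q : ℕ) : Set (Fin q → ℝ) :=
  {x | (∑ i, x i) = 1 ∧ ∀ i, 0 ≤ x i}

/-- The free-energy functional f_{β,h} of the Curie-Weiss-Potts model. -/
def fFE (q : ℕ) [NeZero q] (β h : ℝ) (x : Fin q → ℝ) : ℝ :=
  (∑ i, x i * Real.log (q * x i)) - β / 2 * (∑ i, x i ^ 2) - h * x 0

/-- The set of global minimum points of f_{β,h} on the simplex ℋ. -/
def minSetF (q : ℕ) [NeZero q] (β h : ℝ) : Set (Fin q → ℝ) :=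
  {x | x ∈ simplexH q ∧ ∀ y ∈ simplexH q, fFE q β h x ≤ fFE q β h y}

/-- h₀ = log(q-1) - 2(q-2)/q. -/
def h0 (q : ℕ) : ℝ := Real.log ((q : ℝ) - 1) - 2 * ((q : ℝ) - 2) / q

/-- The critical line h_T. -/
def onCriticalLine (q : ℕ) (β h : ℝ) : Prop :=
  0 ≤ h ∧ h < h0 q ∧ h = Real.log ((q : ℝ) - 1) - β * ((q : ℝ) - 2) / (2 * ((q : ℝ) - 1))

/-- The parametrized point x_z. -/
def xpar (q : ℕ) [NeZero q] (z : ℝ) : Fin q → ℝ :=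
  fun i => if i = 0 then (1 + z) / 2 else (1 - z) / (2 * ((q : ℝ) - 1))

def betaZ (q : ℕ) (z : ℝ) : ℝ :=
  2 * ((q : ℝ) - 1) / (z * q) * Real.log ((1 + z) / (1 - z))

def hZ (q : ℕ) (z : ℝ) : ℝ :=
  Real.log ((q : ℝ) - 1) - ((q : ℝ) - 2) / (2 * ((q : ℝ) - 1)) * betaZ q z


lemma cast_sub_one_ne_zero {q : ℕ} (hq : 2 ≤ q) : (q : ℝ) - 1 ≠ 0 := by
  have : (2 : ℝ) ≤ q := by exact_mod_cast hq
  linarith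

lemma cast_sub_two_div_lt_one {q : ℕ} (hq : 0 < q) : ((q : ℝ) - 2) / q < 1 :=
  (div_lt_one (by positivity)).2 (by linarith)

lemma mul_log_mul_left {c : ℝ} (hc : c ≠ 0) (u : ℝ) :
    u * Real.log (c * u) = u * Real.log c + u * Real.log u := by
  rcases eq_or_ne u 0 with rfl | hu
  · simp
  · rw [Real.log_mul hc hu]
    ring

lemma div_mul_log_div (a : ℝ) {b : ℝ} (hb : b ≠ 0) :
    a / b * Real.log (a / b) = (a * Real.log a - a * Real.log b) / b := by
  rcases eq_or_ne a 0 with rfl | ha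
  · simp
  · rw [Real.log_div ha hb]
    ring

def logRatio (t : ℝ) : ℝ := Real.log ((1 + t) / (1 - t))

lemma hasSum_logRatio_div {t : ℝ} (ht0 : t ≠ 0) (ht : |t| < 1) :
    HasSum (fun k : ℕ => 2 / (2 * k + 1) * t ^ (2 * k)) (logRatio t / t) := by
  have h1 : 1 + t ≠ 0 := by linarith [neg_abs_le t]
  have h2 : 1 - t ≠ 0 := by linarith [le_abs_self t]
  rw [logRatio, Real.log_div h1 h2]
  have hterm (k : ℕ) :
      2 / (2 * k + 1) * t ^ (2 * k) = 2 * (1 / (2 * k + 1)) * t ^ (2 * k + 1) / t := by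
    field_simp
    ring
  simpa only [hterm] using (Real.hasSum_log_sub_log_of_abs_lt_one ht).div_const t

lemma strictMonoOn_logRatio_div : StrictMonoOn (fun t => logRatio t / t) (Set.Ioo 0 1) := by
  intro s ⟨hs0, hs1⟩ t ⟨ht0, ht1⟩ hst
  refine hasSum_lt (i := 1) (fun k => ?_) ?_ (hasSum_logRatio_div hs0.ne' ?_)
    (hasSum_logRatio_div ht0.ne' ?_)
  · gcongr
  · norm_num
    gcongr
  · rw [abs_lt]
    constructor <;> linarith
  · rw [abs_lt]
    constructor <;> linarith

lemma two_lt_logRatio_div {t : ℝ} (ht0 : 0 < t) (ht1 : t < 1) : 2 < logRatio t / t := by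
  refine hasSum_lt (i := 1) (fun k => ?_) ?_ (hasSum_ite_eq 0 (2 : ℝ))
    (hasSum_logRatio_div ht0.ne' ?_)
  · rcases eq_or_ne k 0 with rfl | hk
    · simp
    · simp only [hk, if_false]
      positivity
  · norm_num
    positivity
  · rw [abs_lt]
    constructor <;> linarith

lemma logRatio_sub_two_div {q : ℝ} (hq : 2 < q) : logRatio ((q - 2) / q) = Real.log (q - 1) := by
  rw [logRatio]
  congr 1
  field_simp
  ring

lemma _root_.StrictConcaveOn.add_lt_add_of_mem_Ioo {D : Set ℝ} {f : ℝ → ℝ}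
    (hf : StrictConcaveOn ℝ D f) {p s a b : ℝ} (hp : p ∈ D) (hs : s ∈ D) (hpa : p < a)
    (has : a < s) (hab : a + b = p + s) : f p + f s < f a + f b := by
  have hps : 0 < s - p := by linarith
  set l := (s - a) / (s - p)
  have hl0 : 0 < l := div_pos (by linarith) hps
  have hl1 : 0 < 1 - l := by
    rw [sub_pos, div_lt_one hps]
    linarith
  have ha : l • p + (1 - l) • s = a := by
    simp only [smul_eq_mul, l]
    field_simp
    ring
  have hb : (1 - l) • p + l • s = b := by
    simp only [smul_eq_mul, l]
    field_simp
    linear_combination (p - s) * hab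
  have hfa := hf.2 hp hs (by linarith) hl0 hl1 (by ring)
  have hfb := hf.2 hp hs (by linarith) hl1 hl0 (by ring)
  rw [ha] at hfa
  rw [hb] at hfb
  simp only [smul_eq_mul] at hfa hfb
  linarith

lemma _root_.StrictConvexOn.map_add_div_two_lt {D : Set ℝ} {f : ℝ → ℝ}
    (hf : StrictConvexOn ℝ D f) {x y : ℝ} (hx : x ∈ D) (hy : y ∈ D) (hxy : x ≠ y) :
    f ((x + y) / 2) < (f x + f y) / 2 := by
  have := hf.2 hx hy hxy (by norm_num : (0 : ℝ) < 1 / 2) (by norm_num : (0 : ℝ) < 1 / 2)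
    (by norm_num)
  simp only [smul_eq_mul] at this
  rw [show (x + y) / 2 = 1 / 2 * x + 1 / 2 * y by ring]
  linarith

lemma sum_comp_update_update {ι α M : Type*} [Fintype ι] [DecidableEq ι] [AddCommGroup M]
    (g : α → M) (x : ι → α) {i j : ι} (hij : i ≠ j) (a b : α) :
    ∑ k, g (Function.update (Function.update x i a) j b k)
      = ∑ k, g (x k) + (g a - g (x i)) + (g b - g (x j)) := by
  have hdiff := Fintype.sum_eq_add i j hij
    (f := fun k => g (Function.update (Function.update x i a) j b k) - g (x k)) fun k hk => by
      simp [Function.update_of_ne hk.1, Function.update_of_ne hk.2]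
  simp only [Finset.sum_sub_distrib, Function.update_self, Function.update_of_ne hij] at hdiff
  rw [add_assoc, ← hdiff, add_sub_cancel]

def sitePotential (β t : ℝ) : ℝ := t * Real.log t - β / 2 * t ^ 2

lemma continuous_sitePotential (β : ℝ) : Continuous (sitePotential β) := by
  unfold sitePotential
  have := Real.continuous_mul_log
  fun_prop

lemma hasDerivAt_sitePotential (β : ℝ) {t : ℝ} (ht : t ≠ 0) :
    HasDerivAt (sitePotential β) (Real.log t + 1 - β * t) t :=
  ((Real.hasDerivAt_mul_log ht).sub ((hasDerivAt_pow 2 t).const_mul (β / 2))).congr_deriv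
    (by ring)

lemma hasDerivAt_log_add_one_sub_mul (β : ℝ) {t : ℝ} (ht : t ≠ 0) :
    HasDerivAt (fun t => Real.log t + 1 - β * t) (t⁻¹ - β) t :=
  (((Real.hasDerivAt_log ht).add_const 1).sub ((hasDerivAt_id t).const_mul β)).congr_deriv
    (by simp)

lemma strictConvexOn_sitePotential {β : ℝ} (hβ : 0 < β) :
    StrictConvexOn ℝ (Set.Icc 0 β⁻¹) (sitePotential β) := by
  refine StrictMonoOn.strictConvexOn_of_deriv (convex_Icc _ _)
    (continuous_sitePotential β).continuousOn ?_
  rw [interior_Icc]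
  refine StrictMonoOn.congr (f₁ := fun t => Real.log t + 1 - β * t) ?_
    fun t ht => ((hasDerivAt_sitePotential β ht.1.ne').deriv).symm
  refine strictMonoOn_of_deriv_pos (convex_Ioo _ _) (fun t ht =>
    (hasDerivAt_log_add_one_sub_mul β ht.1.ne').continuousAt.continuousWithinAt) fun t ht => ?_
  rw [interior_Ioo] at ht
  rw [(hasDerivAt_log_add_one_sub_mul β ht.1.ne').deriv, sub_pos]
  exact (lt_inv_comm₀ hβ ht.1).2 ht.2

lemma strictConcaveOn_sitePotential {β : ℝ} (hβ : 0 < β) :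
    StrictConcaveOn ℝ (Set.Ici β⁻¹) (sitePotential β) := by
  have hpos {t : ℝ} (ht : t ∈ Set.Ioi β⁻¹) : 0 < t := (inv_pos.2 hβ).trans ht
  refine StrictAntiOn.strictConcaveOn_of_deriv (convex_Ici _)
    (continuous_sitePotential β).continuousOn ?_
  rw [interior_Ici]
  refine StrictAntiOn.congr (f₁ := fun t => Real.log t + 1 - β * t) ?_
    fun t ht => ((hasDerivAt_sitePotential β (hpos ht).ne').deriv).symm
  refine strictAntiOn_of_deriv_neg (convex_Ioi _) (fun t ht =>
    (hasDerivAt_log_add_one_sub_mul β (hpos ht).ne').continuousAt.continuousWithinAt)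
    fun t ht => ?_
  rw [interior_Ioi] at ht
  rw [(hasDerivAt_log_add_one_sub_mul β (hpos ht).ne').deriv, sub_neg]
  exact (inv_lt_comm₀ (hpos ht) hβ).2 ht

section CriticalLine

variable {q : ℕ} {z : ℝ}

lemma betaZ_eq_mul : betaZ q z = 2 * ((q : ℝ) - 1) / q * (logRatio z / z) := by
  rw [betaZ, logRatio]
  ring

lemma hZ_eq_critical : hZ q z
    = Real.log ((q : ℝ) - 1) - betaZ q z * ((q : ℝ) - 2) / (2 * ((q : ℝ) - 1)) := by
  rw [hZ]
  ring

lemma betaZ_pos (hq : 2 ≤ q) (hz0 : 0 < z) (hz1 : z < 1) : 0 < betaZ q z := by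
  have hq1 : (0 : ℝ) < q - 1 := by
    have : (2 : ℝ) ≤ q := by exact_mod_cast hq
    linarith
  have hL : 0 < logRatio z / z := by linarith [two_lt_logRatio_div hz0 hz1]
  rw [betaZ_eq_mul]
  positivity

lemma hZ_eq_mul_sub (hq : 3 ≤ q) : hZ q z = ((q : ℝ) - 2) / q
    * (logRatio (((q : ℝ) - 2) / q) / (((q : ℝ) - 2) / q) - logRatio z / z) := by
  have hq' : (3 : ℝ) ≤ q := by exact_mod_cast hq
  have hq1 : (q : ℝ) - 1 ≠ 0 := by linarith
  have hq2 : (q : ℝ) - 2 ≠ 0 := by linarith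
  rw [hZ, betaZ_eq_mul, logRatio_sub_two_div (by linarith)]
  field_simp

lemma h0_sub_hZ (hq : 3 ≤ q) : h0 q - hZ q z = ((q : ℝ) - 2) / q * (logRatio z / z - 2) := by
  have hq' : (3 : ℝ) ≤ q := by exact_mod_cast hq
  have hq1 : (q : ℝ) - 1 ≠ 0 := by linarith
  rw [hZ, h0, betaZ_eq_mul]
  field_simp
  ring

lemma hZ_pos (hq : 3 ≤ q) (hz0 : 0 < z) (hz1 : z < ((q : ℝ) - 2) / q) : 0 < hZ q z := by
  have hc1 := cast_sub_two_div_lt_one (by omega : 0 < q)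
  have := strictMonoOn_logRatio_div ⟨hz0, hz1.trans hc1⟩ ⟨hz0.trans hz1, hc1⟩ hz1
  rw [hZ_eq_mul_sub hq]
  exact mul_pos (hz0.trans hz1) (sub_pos.2 this)

lemma onCriticalLine_betaZ_hZ (hq : 3 ≤ q) (hz0 : 0 < z) (hz1 : z < ((q : ℝ) - 2) / q) :
    onCriticalLine q (betaZ q z) (hZ q z) := by
  have hz1' := hz1.trans (cast_sub_two_div_lt_one (by omega : 0 < q))
  have h0_pos : 0 < h0 q - hZ q z := by
    rw [h0_sub_hZ hq]
    exact mul_pos (hz0.trans hz1) (sub_pos.2 (two_lt_logRatio_div hz0 hz1'))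
  exact ⟨(hZ_pos hq hz0 hz1).le, sub_pos.1 h0_pos, hZ_eq_critical⟩

end CriticalLine

section Segment

variable {q : ℕ} [NeZero q]

lemma sum_xpar (f : ℝ → ℝ) (t : ℝ) :
    ∑ i, f (xpar q t i) = f ((1 + t) / 2) + ((q : ℝ) - 1) * f ((1 - t) / (2 * ((q : ℝ) - 1))) := by
  rw [Fintype.sum_eq_add_sum_compl 0, Finset.sum_congr rfl fun i hi => by
    rw [xpar, if_neg (Finset.mem_compl.1 hi ∘ Finset.mem_singleton.2)]]
  simp [xpar, Finset.card_compl, Nat.cast_sub NeZero.one_le]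

lemma xpar_mem_simplexH (hq : 2 ≤ q) {t : ℝ} (ht : t ∈ Set.Icc (-1) 1) :
    xpar q t ∈ simplexH q := by
  have hq1 := cast_sub_one_ne_zero hq
  refine ⟨?_, fun i => ?_⟩
  · have hsum := sum_xpar (q := q) id t
    dsimp only [id] at hsum
    rw [hsum]
    field_simp
    ring
  · have hq' : (2 : ℝ) ≤ q := by exact_mod_cast hq
    unfold xpar
    split_ifs
    · linarith [ht.1]
    · exact div_nonneg (by linarith [ht.2]) (by linarith)

lemma fFE_xpar (hq : 2 ≤ q) (β h t : ℝ) :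
    fFE q β h (xpar q t) = Real.log q - Real.binEntropy ((1 + t) / 2)
      - (1 - t) / 2 * Real.log ((q : ℝ) - 1)
      - β / 8 * ((1 + t) ^ 2 + (1 - t) ^ 2 / ((q : ℝ) - 1)) - h * ((1 + t) / 2) := by
  have hq0 : (q : ℝ) ≠ 0 := Nat.cast_ne_zero.2 (NeZero.ne q)
  have hq1 := cast_sub_one_ne_zero hq
  have hx0 : xpar q t 0 = (1 + t) / 2 := if_pos rfl
  rw [fFE, sum_xpar (fun u => u * Real.log (q * u)), sum_xpar (· ^ 2), hx0]
  simp only [mul_log_mul_left hq0, Real.binEntropy, Real.log_inv,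
    show 1 - (1 + t) / 2 = (1 - t) / 2 by ring, ← div_div, div_mul_log_div _ hq1]
  field_simp
  ring

lemma fFE_xpar_neg (hq : 2 ≤ q) {β h : ℝ}
    (hline : h = Real.log ((q : ℝ) - 1) - β * ((q : ℝ) - 2) / (2 * ((q : ℝ) - 1))) (t : ℝ) :
    fFE q β h (xpar q (-t)) = fFE q β h (xpar q t) := by
  have hq1 := cast_sub_one_ne_zero hq
  rw [fFE_xpar hq, fFE_xpar hq, show (1 + -t) / 2 = 1 - (1 + t) / 2 by ring,
    Real.binEntropy_one_sub, hline]
  field_simp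
  ring

lemma continuous_fFE_xpar (hq : 2 ≤ q) (β h : ℝ) :
    Continuous fun t => fFE q β h (xpar q t) := by
  simp only [fFE_xpar hq]
  fun_prop

lemma hasDerivAt_fFE_xpar (hq : 2 ≤ q) (β h : ℝ) {t : ℝ} (ht : t ∈ Set.Ioo (-1) 1) :
    HasDerivAt (fun t => fFE q β h (xpar q t))
      ((logRatio t + Real.log ((q : ℝ) - 1) - β * ((q : ℝ) - 2) / (2 * ((q : ℝ) - 1)) - h
        - β * q / (2 * ((q : ℝ) - 1)) * t) / 2) t := by
  have hq1 := cast_sub_one_ne_zero hq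
  have hentropy := (Real.hasDerivAt_binEntropy (p := (1 + t) / 2) (by linarith [ht.1])
    (by linarith [ht.2])).comp t (((hasDerivAt_id t).const_add 1).div_const 2)
  have hpoly : HasDerivAt (fun t : ℝ => (1 - t) / 2 * Real.log ((q : ℝ) - 1)
      + β / 8 * ((1 + t) ^ 2 + (1 - t) ^ 2 / ((q : ℝ) - 1)) + h * ((1 + t) / 2))
      (-Real.log ((q : ℝ) - 1) / 2 + β / 4 * ((1 + t) - (1 - t) / ((q : ℝ) - 1)) + h / 2) t := by
    have h1 := (((hasDerivAt_id t).const_sub 1).div_const 2).mul_const (Real.log ((q : ℝ) - 1))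
    have h2 := (((hasDerivAt_id t).const_add 1).pow 2).add
      ((((hasDerivAt_id t).const_sub 1).pow 2).div_const ((q : ℝ) - 1))
    have h3 := ((hasDerivAt_id t).const_add 1).div_const 2
    refine ((h1.add (h2.const_mul (β / 8))).add (h3.const_mul h)).congr_deriv ?_
    simp only [id]
    field_simp
    ring
  have hL : logRatio t = Real.log ((1 + t) / 2) - Real.log (1 - (1 + t) / 2) := by
    rw [logRatio, ← Real.log_div (by linarith [ht.1]) (by linarith [ht.2])]
    congr 1
    field_simp
    ring
  have hφ : (fun t => fFE q β h (xpar q t)) = fun t => Real.log q - Real.binEntropy ((1 + t) / 2)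
      - ((1 - t) / 2 * Real.log ((q : ℝ) - 1)
        + β / 8 * ((1 + t) ^ 2 + (1 - t) ^ 2 / ((q : ℝ) - 1)) + h * ((1 + t) / 2)) := by
    funext t
    rw [fFE_xpar hq]
    ring
  rw [hφ]
  refine ((hentropy.const_sub _).sub hpoly).congr_deriv ?_
  rw [hL]
  field_simp
  ring

end Segment

section Minimizers

variable {q : ℕ} [NeZero q] {β h : ℝ} {x : Fin q → ℝ}

lemma fFE_eq_sum_sitePotential (hx : x ∈ simplexH q) :
    fFE q β h x = Real.log q + ∑ i, sitePotential β (x i) - h * x 0 := by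
  have hq0 : (q : ℝ) ≠ 0 := Nat.cast_ne_zero.2 (NeZero.ne q)
  simp only [fFE, sitePotential, mul_log_mul_left hq0, Finset.sum_add_distrib, ← Finset.sum_mul,
    hx.1, Finset.sum_sub_distrib, ← Finset.mul_sum]
  ring

lemma continuous_fFE (β h : ℝ) : Continuous (fFE q β h) := by
  have hq0 : (q : ℝ) ≠ 0 := Nat.cast_ne_zero.2 (NeZero.ne q)
  have := Real.continuous_mul_log
  unfold fFE
  simp only [mul_log_mul_left hq0]
  fun_prop

lemma minSetF_nonempty (β h : ℝ) : (minSetF q β h).Nonempty := by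
  have hS : simplexH q = stdSimplex ℝ (Fin q) := Set.ext fun _ => and_comm
  obtain ⟨x, hx, hmin⟩ := (isCompact_stdSimplex ℝ (Fin q)).exists_isMinOn
    ⟨_, single_mem_stdSimplex ℝ 0⟩ (continuous_fFE β h).continuousOn
  rw [← hS] at hx hmin
  exact ⟨x, hx, fun y hy => hmin hy⟩

lemma sitePotential_add_le_of_mem_minSetF (hx : x ∈ minSetF q β h) {i j : Fin q} (hij : i ≠ j)
    {a b : ℝ} (ha : 0 ≤ a) (hb : 0 ≤ b) (hab : a + b = x i + x j) :
    sitePotential β (x i) + sitePotential β (x j) - h * x 0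
      ≤ sitePotential β a + sitePotential β b
        - h * Function.update (Function.update x i a) j b 0 := by
  set y := Function.update (Function.update x i a) j b
  have hy : y ∈ simplexH q := by
    refine ⟨?_, fun k => ?_⟩
    · have := sum_comp_update_update id x hij a b
      simp only [id] at this
      rw [this, hx.1.1]
      linarith
    · simp only [y, Function.update_apply]
      split_ifs
      exacts [hb, ha, hx.1.2 k]
  have := hx.2 y hy
  rw [fFE_eq_sum_sitePotential hx.1, fFE_eq_sum_sitePotential hy,
    sum_comp_update_update _ x hij a b] at this
  linarith

lemma le_apply_zero_of_mem_minSetF (hh : 0 < h) (hx : x ∈ minSetF q β h) (i : Fin q) :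
    x i ≤ x 0 := by
  rcases eq_or_ne i 0 with rfl | hi
  · exact le_rfl
  have := sitePotential_add_le_of_mem_minSetF hx hi.symm (hx.1.2 i) (hx.1.2 0) (add_comm _ _)
  simp only [Function.update_of_ne hi.symm, Function.update_self] at this
  nlinarith

lemma apply_le_inv_of_mem_minSetF (hβ : 0 < β) (hh : 0 < h) (hx : x ∈ minSetF q β h)
    {i : Fin q} (hi : i ≠ 0) : x i ≤ β⁻¹ := by
  by_contra! hlt
  have hx0 := le_apply_zero_of_mem_minSetF hh hx i
  set s := x 0 + x i - β⁻¹
  have hmove := sitePotential_add_le_of_mem_minSetF hx hi (inv_pos.2 hβ).le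
    (by linarith [hx.1.2 0] : 0 ≤ s) (by ring)
  have hspread := (strictConcaveOn_sitePotential hβ).add_lt_add_of_mem_Ioo
    Set.self_mem_Ici (by simp only [Set.mem_Ici, s]; linarith : s ∈ Set.Ici β⁻¹) hlt
    (by linarith : x i < s) (by ring : x i + x 0 = β⁻¹ + s)
  simp only [Function.update_self] at hmove
  nlinarith

lemma apply_eq_apply_of_mem_minSetF (hβ : 0 < β) (hh : 0 < h) (hx : x ∈ minSetF q β h)
    {i j : Fin q} (hi : i ≠ 0) (hj : j ≠ 0) : x i = x j := by
  by_contra hne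
  have hij : i ≠ j := fun h => hne (h ▸ rfl)
  have hm : 0 ≤ (x i + x j) / 2 := by linarith [hx.1.2 i, hx.1.2 j]
  have hmove := sitePotential_add_le_of_mem_minSetF hx hij hm hm (by ring)
  have hmid := (strictConvexOn_sitePotential hβ).map_add_div_two_lt
    ⟨hx.1.2 i, apply_le_inv_of_mem_minSetF hβ hh hx hi⟩
    ⟨hx.1.2 j, apply_le_inv_of_mem_minSetF hβ hh hx hj⟩ hne
  simp only [Function.update_of_ne hj.symm, Function.update_of_ne hi.symm] at hmove
  linarith

lemma eq_xpar_of_mem_minSetF (hq : 2 ≤ q) (hβ : 0 < β) (hh : 0 < h) (hx : x ∈ minSetF q β h) :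
    x = xpar q (2 * x 0 - 1) := by
  have hq1 := cast_sub_one_ne_zero hq
  funext i
  rcases eq_or_ne i 0 with rfl | hi
  · rw [xpar, if_pos rfl]
    ring
  have hsum : ∑ k, x k = x 0 + ((q : ℝ) - 1) * x i := by
    rw [Fintype.sum_eq_add_sum_compl 0, Finset.sum_congr rfl fun k hk =>
      apply_eq_apply_of_mem_minSetF hβ hh hx (by simpa using hk) hi]
    simp [Finset.card_compl, Nat.cast_sub NeZero.one_le]
  rw [hx.1.1] at hsum
  rw [xpar, if_neg hi]
  field_simp
  linarith

lemma minSetF_eq_image_xpar (hq : 2 ≤ q) (hβ : 0 < β) (hh : 0 < h) :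
    minSetF q β h = xpar q '' {t ∈ Set.Icc (-1) 1 |
      IsMinOn (fun t => fFE q β h (xpar q t)) (Set.Icc (-1) 1) t} := by
  have hmem {x : Fin q → ℝ} (hx : x ∈ minSetF q β h) : 2 * x 0 - 1 ∈ Set.Icc (-1) 1 := by
    have := Finset.single_le_sum (fun k _ => hx.1.2 k) (Finset.mem_univ 0)
    constructor <;> linarith [hx.1.2 0, hx.1.1]
  ext x
  constructor
  · intro hx
    refine ⟨2 * x 0 - 1, ⟨hmem hx, fun s hs => ?_⟩, (eq_xpar_of_mem_minSetF hq hβ hh hx).symm⟩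
    show fFE q β h (xpar q _) ≤ _
    rw [← eq_xpar_of_mem_minSetF hq hβ hh hx]
    exact hx.2 _ (xpar_mem_simplexH hq hs)
  · rintro ⟨t, ⟨ht, htmin⟩, rfl⟩
    obtain ⟨y, hy⟩ := minSetF_nonempty (q := q) β h
    refine ⟨xpar_mem_simplexH hq ht, fun w hw => ?_⟩
    calc fFE q β h (xpar q t) ≤ fFE q β h (xpar q (2 * y 0 - 1)) := htmin (hmem hy)
      _ = fFE q β h y := by rw [← eq_xpar_of_mem_minSetF hq hβ hh hy]
      _ ≤ fFE q β h w := hy.2 w hw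

end Minimizers

section BetaZ

variable {q : ℕ} [NeZero q] {z : ℝ}

lemma hasDerivAt_fFE_xpar_betaZ (hq : 2 ≤ q) {t : ℝ} (ht0 : 0 < t) (ht1 : t < 1) :
    HasDerivAt (fun t => fFE q (betaZ q z) (hZ q z) (xpar q t))
      (t * (logRatio t / t - logRatio z / z) / 2) t := by
  have hq1 := cast_sub_one_ne_zero hq
  refine (hasDerivAt_fFE_xpar hq _ _ ⟨by linarith, ht1⟩).congr_deriv ?_
  rw [hZ, betaZ_eq_mul]
  field_simp
  ring

lemma strictAntiOn_fFE_xpar_betaZ (hq : 2 ≤ q) (hz0 : 0 < z) (hz1 : z < 1) :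
    StrictAntiOn (fun t => fFE q (betaZ q z) (hZ q z) (xpar q t)) (Set.Icc 0 z) := by
  refine strictAntiOn_of_deriv_neg (convex_Icc _ _) (continuous_fFE_xpar hq _ _).continuousOn
    fun t ht => ?_
  rw [interior_Icc] at ht
  rw [(hasDerivAt_fFE_xpar_betaZ hq ht.1 (ht.2.trans hz1)).deriv]
  have := strictMonoOn_logRatio_div ⟨ht.1, ht.2.trans hz1⟩ ⟨hz0, hz1⟩ ht.2
  have := mul_neg_of_pos_of_neg ht.1 (sub_neg.2 this)
  linarith

lemma strictMonoOn_fFE_xpar_betaZ (hq : 2 ≤ q) (hz0 : 0 < z) :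
    StrictMonoOn (fun t => fFE q (betaZ q z) (hZ q z) (xpar q t)) (Set.Icc z 1) := by
  refine strictMonoOn_of_deriv_pos (convex_Icc _ _) (continuous_fFE_xpar hq _ _).continuousOn
    fun t ht => ?_
  rw [interior_Icc] at ht
  rw [(hasDerivAt_fFE_xpar_betaZ hq (hz0.trans ht.1) ht.2).deriv]
  have := strictMonoOn_logRatio_div ⟨hz0, ht.1.trans ht.2⟩ ⟨hz0.trans ht.1, ht.2⟩ ht.1
  have := mul_pos (hz0.trans ht.1) (sub_pos.2 this)
  linarith

lemma fFE_xpar_betaZ_lt (hq : 2 ≤ q) (hz0 : 0 < z) (hz1 : z < 1) {t : ℝ}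
    (ht : t ∈ Set.Icc (-1) 1) (htz : t ≠ z) (htz' : t ≠ -z) :
    fFE q (betaZ q z) (hZ q z) (xpar q z) < fFE q (betaZ q z) (hZ q z) (xpar q t) := by
  have habs : fFE q (betaZ q z) (hZ q z) (xpar q |t|)
      = fFE q (betaZ q z) (hZ q z) (xpar q t) := by
    rcases abs_choice t with h | h <;> rw [h]
    exact fFE_xpar_neg hq hZ_eq_critical t
  have htz'' : |t| ≠ z := fun h => (abs_eq hz0.le).1 h |>.elim htz htz'
  rw [← habs]
  rcases htz''.lt_or_gt with hlt | hgt
  · exact strictAntiOn_fFE_xpar_betaZ hq hz0 hz1 ⟨abs_nonneg t, hlt.le⟩ ⟨hz0.le, le_rfl⟩ hlt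
  · exact strictMonoOn_fFE_xpar_betaZ hq hz0 ⟨le_rfl, hz1.le⟩ ⟨hgt.le, abs_le.2 ht⟩ hgt

lemma setOf_isMinOn_fFE_xpar_betaZ (hq : 2 ≤ q) (hz0 : 0 < z) (hz1 : z < 1) :
    {t ∈ Set.Icc (-1) 1 |
      IsMinOn (fun t => fFE q (betaZ q z) (hZ q z) (xpar q t)) (Set.Icc (-1) 1) t} = {z, -z} := by
  have hz : z ∈ Set.Icc (-1) 1 := ⟨by linarith, hz1.le⟩
  have hz' : -z ∈ Set.Icc (-1) 1 := ⟨by linarith, by linarith⟩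
  have heven := fFE_xpar_neg hq (hZ_eq_critical (z := z)) z
  have hmin : IsMinOn (fun t => fFE q (betaZ q z) (hZ q z) (xpar q t)) (Set.Icc (-1) 1) z := by
    refine isMinOn_iff.2 fun s hs => ?_
    by_cases hsz : s = z
    · rw [hsz]
    by_cases hsz' : s = -z
    · rw [hsz', heven]
    · exact (fFE_xpar_betaZ_lt hq hz0 hz1 hs hsz hsz').le
  ext t
  simp only [Set.mem_sep_iff, Set.mem_insert_iff, Set.mem_singleton_iff]
  constructor
  · rintro ⟨ht, htmin⟩
    by_contra! hne
    exact (fFE_xpar_betaZ_lt hq hz0 hz1 ht hne.1 hne.2).not_ge (htmin hz)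
  · rintro (rfl | rfl)
    · exact ⟨hz, hmin⟩
    · exact ⟨hz', fun s hs => heven.le.trans (hmin hs)⟩

end BetaZ

/-- For z ∈ (0,(q-2)/q), the point (β_z,h_z) lies on the critical line and the
global minimum points of f_{β_z,h_z} on ℋ are exactly x_z and x_{-z}. -/
theorem stmt_1 (q : ℕ) [NeZero q] (hq : 3 ≤ q) (z : ℝ) (hz0 : 0 < z)
    (hz1 : z < ((q : ℝ) - 2) / q) :
    onCriticalLine q (betaZ q z) (hZ q z) ∧
    minSetF q (betaZ q z) (hZ q z) = {xpar q z, xpar q (-z)} := by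
  have hz1' : z < 1 := hz1.trans (cast_sub_two_div_lt_one (by omega))
  refine ⟨onCriticalLine_betaZ_hZ hq hz0 hz1, ?_⟩
  rw [minSetF_eq_image_xpar (by omega) (betaZ_pos (by omega) hz0 hz1') (hZ_pos hq hz0 hz1),
    setOf_isMinOn_fFE_xpar_betaZ (by omega) hz0 hz1', Set.image_pair]

end CWP
end
end

section
/- Let q ≥ 3, β > 0 and h ≥ 0. Then the set of global minimum points of f_{β,h} on the simplex ℋ coincides with the set of global minimum points of G_{β,h} on ℝ^q; in particular every global minimum point of G_{β,h} lies in ℋ. -/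
open Finset

noncomputable section

namespace CWP

/-- The function G_{β,h}. -/
def G (q : ℕ) [NeZero q] (β h : ℝ) (u : Fin q → ℝ) : ℝ :=
  β / 2 * (∑ i, u i ^ 2) -
    Real.log (∑ k, Real.exp (β * u k + if k = 0 then h else 0))

/-!
Gibbs' variational principle says that for every energy vector `a`,
`log ∑ exp a = max_{x ∈ ℋ} (⟨x, a⟩ - ∑ x log x)`, attained at the softmax of `a`.
Applied to `a = βu + h e₁` and combined with `β/2 ‖u‖² - β⟨x, u⟩ = β/2 ‖u - x‖² - β/2 ‖x‖²` it gives
`G u = min_{x ∈ ℋ} (f x - log q + β/2 ‖u - x‖²)`, attained at `x = softmax (βu + h e₁)`.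
Hence `G ≤ f - log q` on `ℋ`, while `G u ≥ f (softmax …) - log q`, so the two functions have the
same minimum value. At a minimiser `u` of `G` the penalty `β/2 ‖u - softmax …‖²` must vanish, so `u`
is its own softmax, which lies in `ℋ`.
-/

section Gibbs

variable {ι : Type*} [Fintype ι]

lemma mul_log_sub_mul_log_le_sub {x y : ℝ} (hx : 0 ≤ x) (hy : 0 < y) :
    x * Real.log y - x * Real.log x ≤ y - x := by
  rcases hx.eq_or_lt with rfl | hx
  · simpa using hy.le
  have h := mul_le_mul_of_nonneg_left (Real.log_le_sub_one_of_pos (div_pos hy hx)) hx.le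
  rw [Real.log_div hy.ne' hx.ne', mul_sub_one, mul_div_cancel₀ _ hx.ne'] at h
  linarith

def softmax (a : ι → ℝ) (i : ι) : ℝ :=
  Real.exp (a i) / ∑ j, Real.exp (a j)

variable [Nonempty ι]

lemma sum_exp_pos (a : ι → ℝ) : 0 < ∑ i, Real.exp (a i) :=
  Finset.sum_pos (fun _ _ => Real.exp_pos _) univ_nonempty

lemma softmax_pos (a : ι → ℝ) (i : ι) : 0 < softmax a i :=
  div_pos (Real.exp_pos _) (sum_exp_pos a)

lemma sum_softmax (a : ι → ℝ) : ∑ i, softmax a i = 1 := by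
  simp only [softmax, ← Finset.sum_div, div_self (sum_exp_pos a).ne']

lemma log_softmax (a : ι → ℝ) (i : ι) :
    Real.log (softmax a i) = a i - Real.log (∑ j, Real.exp (a j)) := by
  rw [softmax, Real.log_div (Real.exp_ne_zero _) (sum_exp_pos a).ne', Real.log_exp]

theorem sum_mul_sub_sum_mul_log_le_log_sum_exp (a x : ι → ℝ)
    (hx₀ : ∀ i, 0 ≤ x i) (hx₁ : ∑ i, x i = 1) :
    ∑ i, x i * a i - ∑ i, x i * Real.log (x i) ≤ Real.log (∑ i, Real.exp (a i)) := by
  have hterm (i : ι) : x i * (a i - Real.log (∑ j, Real.exp (a j))) - x i * Real.log (x i) ≤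
      softmax a i - x i := by
    simpa [← log_softmax] using mul_log_sub_mul_log_le_sub (hx₀ i) (softmax_pos a i)
  have hsum := Finset.sum_le_sum fun i (_ : i ∈ univ) => hterm i
  simp only [mul_sub, Finset.sum_sub_distrib, ← Finset.sum_mul, hx₁, sum_softmax] at hsum
  linarith

theorem sum_mul_sub_sum_mul_log_softmax (a : ι → ℝ) :
    ∑ i, softmax a i * a i - ∑ i, softmax a i * Real.log (softmax a i) =
      Real.log (∑ i, Real.exp (a i)) := by
  simp only [log_softmax, mul_sub, Finset.sum_sub_distrib, ← Finset.sum_mul, sum_softmax]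
  ring

end Gibbs

section FreeEnergy

variable {q : ℕ} [NeZero q] {β h : ℝ}

lemma softmax_mem_simplexH (a : Fin q → ℝ) : softmax a ∈ simplexH q :=
  ⟨sum_softmax a, fun i => (softmax_pos a i).le⟩

def energy (q : ℕ) [NeZero q] (β h : ℝ) (u : Fin q → ℝ) (k : Fin q) : ℝ :=
  β * u k + if k = 0 then h else 0

lemma sum_mul_energy (u x : Fin q → ℝ) :
    ∑ k, x k * energy q β h u k = β * ∑ k, x k * u k + h * x 0 := by
  simp [energy, mul_add, Finset.sum_add_distrib, Finset.mul_sum, mul_left_comm, mul_comm]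

lemma fFE_sub_log_add_sq_eq_G_add {x : Fin q → ℝ} (hx : ∑ k, x k = 1) (u : Fin q → ℝ) :
    fFE q β h x - Real.log q + β / 2 * ∑ k, (u k - x k) ^ 2 =
      G q β h u + (Real.log (∑ k, Real.exp (energy q β h u k)) -
        (∑ k, x k * energy q β h u k - ∑ k, x k * Real.log (x k))) := by
  have hq : (q : ℝ) ≠ 0 := Nat.cast_ne_zero.mpr (NeZero.ne q)
  have hlog (k : Fin q) : x k * Real.log (q * x k) = x k * Real.log q + x k * Real.log (x k) := by
    rcases eq_or_ne (x k) 0 with hk | hk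
    · simp [hk]
    · rw [Real.log_mul hq hk, mul_add]
  have hsq : ∑ k, (u k - x k) ^ 2 = ∑ k, u k ^ 2 - 2 * ∑ k, x k * u k + ∑ k, x k ^ 2 := by
    simp only [Finset.mul_sum, ← Finset.sum_sub_distrib, ← Finset.sum_add_distrib]
    exact Finset.sum_congr rfl fun k _ => by ring
  simp only [fFE, G, hlog, Finset.sum_add_distrib, ← Finset.sum_mul, hx, hsq, sum_mul_energy]
  unfold energy
  ring

lemma G_le_fFE_sub_log_add_sq {x : Fin q → ℝ} (hx : x ∈ simplexH q) (u : Fin q → ℝ) :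
    G q β h u ≤ fFE q β h x - Real.log q + β / 2 * ∑ k, (u k - x k) ^ 2 := by
  rw [fFE_sub_log_add_sq_eq_G_add hx.1]
  linarith [sum_mul_sub_sum_mul_log_le_log_sum_exp (energy q β h u) x hx.2 hx.1]

lemma G_eq_fFE_softmax (u : Fin q → ℝ) :
    G q β h u = fFE q β h (softmax (energy q β h u)) - Real.log q +
      β / 2 * ∑ k, (u k - softmax (energy q β h u) k) ^ 2 := by
  rw [fFE_sub_log_add_sq_eq_G_add (sum_softmax _), sum_mul_sub_sum_mul_log_softmax, sub_self,
    add_zero]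

lemma G_le_fFE_sub_log {x : Fin q → ℝ} (hx : x ∈ simplexH q) :
    G q β h x ≤ fFE q β h x - Real.log q := by
  simpa using G_le_fFE_sub_log_add_sq (β := β) (h := h) hx x

lemma fFE_softmax_sub_log_le_G (hβ : 0 ≤ β) (u : Fin q → ℝ) :
    fFE q β h (softmax (energy q β h u)) - Real.log q ≤ G q β h u := by
  rw [G_eq_fFE_softmax]
  have : 0 ≤ ∑ k, (u k - softmax (energy q β h u) k) ^ 2 := by positivity
  nlinarith

lemma eq_softmax_of_G_le (hβ : 0 < β) {u : Fin q → ℝ}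
    (hu : G q β h u ≤ G q β h (softmax (energy q β h u))) :
    u = softmax (energy q β h u) := by
  set p := softmax (energy q β h u)
  have hdist : β / 2 * ∑ k, (u k - p k) ^ 2 ≤ 0 := by
    linarith [G_eq_fFE_softmax (β := β) (h := h) u,
      G_le_fFE_sub_log (β := β) (h := h) (softmax_mem_simplexH (energy q β h u))]
  have hzero : ∑ k, (u k - p k) ^ 2 = 0 :=
    le_antisymm (nonpos_of_mul_nonpos_right hdist (by positivity)) (by positivity)
  funext k
  have hk := (Finset.sum_eq_zero_iff_of_nonneg fun k _ => sq_nonneg (u k - p k)).mp hzero k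
    (mem_univ k)
  exact sub_eq_zero.mp (pow_eq_zero_iff two_ne_zero |>.mp hk)

end FreeEnergy

theorem stmt_5_general (q : ℕ) [NeZero q] (β h : ℝ) (hβ : 0 < β) :
    minSetF q β h = {u | ∀ y, G q β h u ≤ G q β h y} ∧
    ∀ u : Fin q → ℝ, (∀ y, G q β h u ≤ G q β h y) → u ∈ simplexH q := by
  have hmin : minSetF q β h = {u | ∀ y, G q β h u ≤ G q β h y} := by
    ext x
    constructor
    · rintro ⟨hx, hfx⟩ y
      calc G q β h x ≤ fFE q β h x - Real.log q := G_le_fFE_sub_log hx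
        _ ≤ fFE q β h (softmax (energy q β h y)) - Real.log q := by
          linarith [hfx _ (softmax_mem_simplexH (energy q β h y))]
        _ ≤ G q β h y := fFE_softmax_sub_log_le_G hβ.le y
    · intro hGx
      have hfix := eq_softmax_of_G_le hβ (hGx _)
      have hfx : fFE q β h x - Real.log q ≤ G q β h x := by
        conv_lhs => rw [hfix]
        exact fFE_softmax_sub_log_le_G hβ.le x
      refine ⟨hfix ▸ softmax_mem_simplexH _, fun y hy => ?_⟩
      linarith [hGx y, G_le_fFE_sub_log (β := β) (h := h) hy]
  exact ⟨hmin, fun u hu => (hmin.symm ▸ hu : u ∈ minSetF q β h).1⟩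

/-- For β > 0 and h ≥ 0 the global minimum points of f_{β,h} on ℋ coincide with
the global minimum points of G_{β,h} on ℝ^q; in particular every global minimum
point of G_{β,h} lies in ℋ. -/
theorem stmt_5 (q : ℕ) [NeZero q] (hq : 3 ≤ q) (β h : ℝ) (hβ : 0 < β) (hh : 0 ≤ h) :
    minSetF q β h = {u | ∀ y, G q β h u ≤ G q β h y} ∧
    ∀ u : Fin q → ℝ, (∀ y, G q β h u ≤ G q β h y) → u ∈ simplexH q :=
  stmt_5_general q β h hβ

end CWP
end
end
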